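/- arXiv:math/0606199 — 2 statements merged into one kernel-verified Lean document; each statement's English description precedes it below -/
import Mathlib

section
/- Let G be a group and g ∈ G. Suppose there is a fixed integer N such that for every integer k ≥ 1 the power gᵏ is a product of at most N torsion elements of G. Then every homogeneous quasi-homomorphism φ : G → ℝ satisfies φ(g) = 0. -/
/-! A homogeneous quasimorphism with defect `D` vanishes on torsion elements, and on a product of
`n` elements it differs from the sum of their values by at most `D * n`. Hence
`k * |φ g| = |φ (g ^ k)| ≤ D * N` for every `k ≥ 1`, which forces `φ g = 0`. -/

section Homogeneous

variable {G : Type*} [Group G] {φ : G → ℝ}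

theorem map_one_eq_zero_of_homogeneous (h_hom : ∀ (x : G) (n : ℤ), φ (x ^ n) = n * φ x) :
    φ 1 = 0 := by
  simpa using h_hom 1 0

theorem map_pow_of_homogeneous (h_hom : ∀ (x : G) (n : ℤ), φ (x ^ n) = n * φ x) (x : G) (k : ℕ) :
    φ (x ^ k) = k * φ x := by
  exact_mod_cast h_hom x k

theorem map_eq_zero_of_pow_eq_one (h_hom : ∀ (x : G) (n : ℤ), φ (x ^ n) = n * φ x) {x : G}
    {m : ℕ} (hm : 0 < m) (hx : x ^ m = 1) : φ x = 0 := by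
  have h := map_pow_of_homogeneous h_hom x m
  rw [hx, map_one_eq_zero_of_homogeneous h_hom] at h
  exact (mul_eq_zero.mp h.symm).resolve_left (by positivity)

end Homogeneous

theorem abs_map_list_prod_sub_sum_le {G : Type*} [Group G] {φ : G → ℝ} {D : ℝ} (hφ1 : φ 1 = 0)
    (hD : ∀ x y : G, |φ (x * y) - φ x - φ y| ≤ D) (l : List G) :
    |φ l.prod - (l.map φ).sum| ≤ D * l.length := by
  induction l with
  | nil => simp [hφ1]
  | cons a t ih =>
    calc |φ (a * t.prod) - (φ a + (t.map φ).sum)|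
        = |(φ (a * t.prod) - φ a - φ t.prod) + (φ t.prod - (t.map φ).sum)| := by ring_nf
      _ ≤ |φ (a * t.prod) - φ a - φ t.prod| + |φ t.prod - (t.map φ).sum| := abs_add_le _ _
      _ ≤ D + D * t.length := add_le_add (hD a t.prod) ih
      _ = D * (a :: t).length := by rw [List.length_cons]; push_cast; ring

theorem eq_zero_of_forall_nat_mul_abs_le {x C : ℝ} (h : ∀ k : ℕ, 1 ≤ k → k * |x| ≤ C) :
    x = 0 := by
  by_contra hx
  obtain ⟨k, hk⟩ := exists_nat_gt (C / |x|)
  have hkC := h (k + 1) (by omega)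
  rw [div_lt_iff₀ (abs_pos.mpr hx)] at hk
  push_cast at hkC
  nlinarith [abs_nonneg x]

/-- If there is a fixed `N` such that every power `g ^ k` (`k ≥ 1`) is a product of at
most `N` torsion elements, then every homogeneous quasi-homomorphism vanishes on `g`. -/
theorem homogeneous_quasimorphism_vanishes_of_bounded_torsion_length {G : Type*} [Group G]
    (g : G) (N : ℕ)
    (h_bdd : ∀ k : ℕ, 1 ≤ k → ∃ l : List G, l.length ≤ N ∧
      (∀ x ∈ l, ∃ m : ℕ, 0 < m ∧ x ^ m = 1) ∧ g ^ k = l.prod)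
    (φ : G → ℝ)
    (h_quasi : ∃ D : ℝ, 0 ≤ D ∧ ∀ x y : G, |φ (x * y) - φ x - φ y| ≤ D)
    (h_hom : ∀ (x : G) (n : ℤ), φ (x ^ n) = n * φ x) :
    φ g = 0 := by
  obtain ⟨D, hD0, hD⟩ := h_quasi
  refine eq_zero_of_forall_nat_mul_abs_le (C := D * N) fun k hk => ?_
  obtain ⟨l, hlen, hl_torsion, hprod⟩ := h_bdd k hk
  have hsum : (l.map φ).sum = 0 := List.sum_eq_zero <| by
    simp only [List.mem_map]
    rintro _ ⟨x, hx, rfl⟩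
    obtain ⟨m, hm, hxm⟩ := hl_torsion x hx
    exact map_eq_zero_of_pow_eq_one h_hom hm hxm
  calc (k : ℝ) * |φ g| = |φ l.prod - (l.map φ).sum| := by
        rw [hsum, sub_zero, ← hprod, map_pow_of_homogeneous h_hom, abs_mul, Nat.abs_cast]
    _ ≤ D * l.length := abs_map_list_prod_sub_sum_le (map_one_eq_zero_of_homogeneous h_hom) hD l
    _ ≤ D * N := by gcongr
end

section
/- Let G be a group, let a₁, a₂, b₁, b₂ ∈ G pairwise commute, and let φ₁, φ₂ ∈ G be involutions (φᵢ² = 1) with φᵢaᵢφᵢ⁻¹ = bᵢ for i = 1, 2. Then for every integer k, (a₁a₂b₁⁻¹b₂⁻¹)ᵏ = [a₁ᵏ, φ₁]·[a₂ᵏ, φ₂], where [x,y] = xyx⁻¹y⁻¹. In particular each power of a₁a₂b₁⁻¹b₂⁻¹ is a product of two commutators and of four involutions. -/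
/-! Since `φᵢ` conjugates `aᵢ` to `bᵢ`, the commutator `[aᵢᵏ, φᵢ]` equals `aᵢᵏ bᵢ⁻ᵏ`, and as all
four elements commute, the product of these two commutators is `(a₁a₂b₁⁻¹b₂⁻¹)ᵏ`. A commutator
`[x, φ]` with `φ` an involution is the product of the two involutions `xφx⁻¹` and `φ⁻¹ = φ`. -/

open scoped commutatorElement

section

variable {G : Type*} [Group G]

theorem commutatorElement_zpow_left_of_conj_eq {a b φ : G} (h : φ * a * φ⁻¹ = b) (k : ℤ) :
    ⁅a ^ k, φ⁆ = a ^ k * (b ^ k)⁻¹ := by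
  rw [commutatorElement_def, ← h, conj_zpow]
  group

theorem zpow_mul_mul_inv_mul_inv_of_commute {a₁ a₂ b₁ b₂ : G} (h12 : Commute a₁ a₂)
    (ha1b1 : Commute a₁ b₁) (ha1b2 : Commute a₁ b₂) (ha2b1 : Commute a₂ b₁)
    (ha2b2 : Commute a₂ b₂) (hb12 : Commute b₁ b₂) (k : ℤ) :
    (a₁ * a₂ * b₁⁻¹ * b₂⁻¹) ^ k = a₁ ^ k * (b₁ ^ k)⁻¹ * (a₂ ^ k * (b₂ ^ k)⁻¹) := by
  have hregroup : a₁ * a₂ * b₁⁻¹ * b₂⁻¹ = a₁ * b₁⁻¹ * (a₂ * b₂⁻¹) := by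
    rw [mul_assoc a₁ a₂, ha2b1.inv_right.eq]
    simp only [mul_assoc]
  have hcomm : Commute (a₁ * b₁⁻¹) (a₂ * b₂⁻¹) :=
    (h12.mul_right ha1b2.inv_right).mul_left (ha2b1.symm.inv_left.mul_right hb12.inv_inv)
  rw [hregroup, hcomm.mul_zpow, ha1b1.inv_right.mul_zpow, ha2b2.inv_right.mul_zpow, inv_zpow,
    inv_zpow]

theorem exists_sq_eq_one_mul_eq_commutatorElement (x : G) {φ : G} (hφ : φ ^ 2 = 1) :
    ∃ s t : G, s ^ 2 = 1 ∧ t ^ 2 = 1 ∧ ⁅x, φ⁆ = s * t := by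
  have hφ_inv : φ⁻¹ = φ := by rw [inv_eq_iff_mul_eq_one, ← sq, hφ]
  refine ⟨x * φ * x⁻¹, φ, by rw [conj_pow, hφ, mul_one, mul_inv_cancel], hφ, ?_⟩
  rw [commutatorElement_def, hφ_inv]

end

/-- If `a₁, a₂, b₁, b₂` pairwise commute and `φᵢ` are involutions with `φᵢaᵢφᵢ⁻¹ = bᵢ`,
then `(a₁a₂b₁⁻¹b₂⁻¹)ᵏ = [a₁ᵏ, φ₁]·[a₂ᵏ, φ₂]` for every integer `k`; in particular each
power of `a₁a₂b₁⁻¹b₂⁻¹` is a product of two commutators and of four involutions. -/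
theorem power_eq_two_commutators_and_four_involutions {G : Type*} [Group G]
    (a₁ a₂ b₁ b₂ φ₁ φ₂ : G)
    (h12 : a₁ * a₂ = a₂ * a₁) (ha1b1 : a₁ * b₁ = b₁ * a₁)
    (ha1b2 : a₁ * b₂ = b₂ * a₁) (ha2b1 : a₂ * b₁ = b₁ * a₂)
    (ha2b2 : a₂ * b₂ = b₂ * a₂) (hb12 : b₁ * b₂ = b₂ * b₁)
    (hφ₁ : φ₁ ^ 2 = 1) (hφ₂ : φ₂ ^ 2 = 1)
    (hc₁ : φ₁ * a₁ * φ₁⁻¹ = b₁) (hc₂ : φ₂ * a₂ * φ₂⁻¹ = b₂) :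
    (∀ k : ℤ, (a₁ * a₂ * b₁⁻¹ * b₂⁻¹) ^ k =
      (a₁ ^ k * φ₁ * (a₁ ^ k)⁻¹ * φ₁⁻¹) * (a₂ ^ k * φ₂ * (a₂ ^ k)⁻¹ * φ₂⁻¹)) ∧
    (∀ k : ℤ, ∃ p q r s : G, (a₁ * a₂ * b₁⁻¹ * b₂⁻¹) ^ k =
      (p * q * p⁻¹ * q⁻¹) * (r * s * r⁻¹ * s⁻¹)) ∧
    (∀ k : ℤ, ∃ s₁ s₂ s₃ s₄ : G,
      s₁ ^ 2 = 1 ∧ s₂ ^ 2 = 1 ∧ s₃ ^ 2 = 1 ∧ s₄ ^ 2 = 1 ∧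
      (a₁ * a₂ * b₁⁻¹ * b₂⁻¹) ^ k = s₁ * s₂ * s₃ * s₄) := by
  have hformula (k : ℤ) : (a₁ * a₂ * b₁⁻¹ * b₂⁻¹) ^ k = ⁅a₁ ^ k, φ₁⁆ * ⁅a₂ ^ k, φ₂⁆ := by
    rw [commutatorElement_zpow_left_of_conj_eq hc₁, commutatorElement_zpow_left_of_conj_eq hc₂,
      zpow_mul_mul_inv_mul_inv_of_commute h12 ha1b1 ha1b2 ha2b1 ha2b2 hb12]
  refine ⟨hformula, fun k => ⟨_, _, _, _, hformula k⟩, fun k => ?_⟩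
  obtain ⟨s₁, s₂, hs₁, hs₂, h₁⟩ := exists_sq_eq_one_mul_eq_commutatorElement (a₁ ^ k) hφ₁
  obtain ⟨s₃, s₄, hs₃, hs₄, h₂⟩ := exists_sq_eq_one_mul_eq_commutatorElement (a₂ ^ k) hφ₂
  exact ⟨s₁, s₂, s₃, s₄, hs₁, hs₂, hs₃, hs₄, by rw [hformula, h₁, h₂, ← mul_assoc]⟩
end
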